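/- arXiv:1605.04995 — 2 statements merged into one kernel-verified Lean document; each statement's English description precedes it below -/
import Mathlib

section
/- Let g : ℝ → ℝ be continuous and piecewise continuously differentiable with e^{−Φ(q) y} g(y) → 0 as y → ∞ and Ψ(x; |g|) < ∞ and Ψ(x; |g′|) < ∞ for all x (g′ taken as the right-derivative at non-differentiability points). Then for all real s ≤ S, Φ(q) Ψ(s; g) W̄(S−s) − φ_s(S; g) = ∫_s^S Ψ(y; g′) Θ̄(S−y) dy, where W̄(x) = ∫₀^x W(y) dy and Θ̄(x) = W(x) − Φ(q) W̄(x). In particular, for any K, the function Λ(s,S) = Φ(q) Ψ(s; g) W̄(S−s) + K − φ_s(S; g) equals ∫_s^S Ψ(y; g′) Θ̄(S−y) dy + K. -/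
/-! With `P(y) = Ψ(y; g)`, differentiating under the integral gives `P' = Φ P - g`, and
integrating by parts against `e^{-Φ (t - y)}` on `[y, ∞)` gives `Ψ(y; g') = Φ P(y) - g(y)` as
well, so the right-hand side is `∫_s^S P'(y) Θ̄(S - y) dy`. Since
`(P(y) W̄(S - y))' = P'(y) W̄(S - y) - P(y) W(S - y)`, this integrand is
`-W(S - y) g(y) - Φ (P(y) W̄(S - y))'`, and `W̄(0) = 0` leaves `Φ P(s) W̄(S - s) - φ_s(S; g)`. -/

open MeasureTheory Set Filter Topology

noncomputable section

/-- The Laplace exponent of a spectrally negative Lévy process with data `(γ, σ, ν)`. -/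
def psi (γ σ : ℝ) (ν : Measure ℝ) (s : ℝ) : ℝ :=
  γ * s + σ ^ 2 * s ^ 2 / 2 +
    ∫ z in Set.Iio (0 : ℝ), (Real.exp (s * z) - 1 - s * z * (if -1 < z then (1:ℝ) else 0)) ∂ν

/-- `Φ(q) = sup {λ ≥ 0 : ψ(λ) = q}`. -/
def PhiQ (γ σ : ℝ) (ν : Measure ℝ) (q : ℝ) : ℝ :=
  sSup {l : ℝ | 0 ≤ l ∧ psi γ σ ν l = q}

/-- `Z^{(q)}(x) = 1 + q ∫₀ˣ W(y) dy`. -/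
def Zfun (q : ℝ) (W : ℝ → ℝ) (x : ℝ) : ℝ := 1 + q * ∫ y in (0:ℝ)..x, W y

/-- `Z̄^{(q)}(x) = ∫₀ˣ Z(z) dz`. -/
def Zbar (q : ℝ) (W : ℝ → ℝ) (x : ℝ) : ℝ := ∫ z in (0:ℝ)..x, Zfun q W z

/-- `R^{(q)}(x) = Z̄(x) + ψ'(0+)/q`. -/
def Rfun (q psi'0 : ℝ) (W : ℝ → ℝ) (x : ℝ) : ℝ := Zbar q W x + psi'0 / q

/-- `Ψ(s; h) = ∫_s^∞ e^{-Φ(q)(y-s)} h(y) dy`. -/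
def PsiInt (Φq s : ℝ) (h : ℝ → ℝ) : ℝ := ∫ y in Set.Ioi s, Real.exp (-Φq * (y - s)) * h y

/-- `φ_s(x; h) = ∫_s^x W(x-y) h(y) dy`. -/
def phiInt (W : ℝ → ℝ) (s x : ℝ) (h : ℝ → ℝ) : ℝ := ∫ y in s..x, W (x - y) * h y

/-- Integrand of the nonlocal part of the generator `L`. -/
def genInt (h : ℝ → ℝ) (x z : ℝ) : ℝ :=
  h (x + z) - h x - deriv h x * z * (if -1 < z then (1:ℝ) else 0)

/-- The generator `L` of the Lévy process, applied to a sufficiently smooth function. -/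
def Lgen (γ σ : ℝ) (ν : Measure ℝ) (h : ℝ → ℝ) (x : ℝ) : ℝ :=
  γ * deriv h x + σ ^ 2 / 2 * deriv (deriv h) x + ∫ z in Set.Iio (0 : ℝ), genInt h x z ∂ν

/-- `W̄(x) = ∫₀ˣ W(y) dy`. -/
def Wbar (W : ℝ → ℝ) (x : ℝ) : ℝ := ∫ y in (0:ℝ)..x, W y

/-- `Θ̄(x) = W(x) − Φ(q) W̄(x)`. -/
def Thetabar (Φq : ℝ) (W : ℝ → ℝ) (x : ℝ) : ℝ := W x - Φq * Wbar W x

theorem integral_Ioi_of_hasDerivWithinAt_Ioi_of_tendsto {f f' : ℝ → ℝ} {a m : ℝ}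
    (hcont : ContinuousOn f (Ici a)) (hderiv : ∀ x ∈ Ioi a, HasDerivWithinAt f (f' x) (Ioi x) x)
    (f'int : IntegrableOn f' (Ioi a)) (hf : Tendsto f atTop (𝓝 m)) :
    ∫ x in Ioi a, f' x = m - f a := by
  refine tendsto_nhds_unique (intervalIntegral_tendsto_integral_Ioi a f'int tendsto_id) ?_
  refine (hf.sub_const _).congr' ?_
  filter_upwards [eventually_ge_atTop a] with b hab
  symm
  refine intervalIntegral.integral_eq_sub_of_hasDeriv_right_of_le hab
    (hcont.mono Icc_subset_Ici_self) (fun x hx => hderiv x hx.1) ?_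
  exact (intervalIntegrable_iff_integrableOn_Ioc_of_le hab).2 <| f'int.mono_set Ioc_subset_Ioi_self

theorem hasDerivAt_integral_Ioi {f : ℝ → ℝ} {a u : ℝ} (hint : IntegrableOn f (Ioi a))
    (hau : a < u) (hf : ContinuousAt f u) :
    HasDerivAt (fun b => ∫ x in Ioi b, f x) (-f u) u := by
  have hprim : HasDerivAt (fun b => ∫ x in a..b, f x) (f u) u :=
    intervalIntegral.integral_hasDerivAt_right
      ((intervalIntegrable_iff_integrableOn_Ioc_of_le hau.le).2 (hint.mono_set Ioc_subset_Ioi_self))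
      (AEStronglyMeasurable.stronglyMeasurableAtFilter_of_mem hint.aestronglyMeasurable
        (Ioi_mem_nhds hau)) hf
  refine (hprim.const_sub (∫ x in Ioi a, f x)).congr_of_eventuallyEq ?_
  filter_upwards [Ioi_mem_nhds hau] with b hab
  rw [← intervalIntegral.integral_Ioi_sub_Ioi hint hab.le, sub_sub_cancel]

theorem integrableOn_exp_mul_of_abs {Φ x : ℝ} {h : ℝ → ℝ} (hh : AEStronglyMeasurable h)
    (hint : IntegrableOn (fun y => Real.exp (-Φ * (y - x)) * |h y|) (Ioi x)) :
    IntegrableOn (fun y => Real.exp (-Φ * (y - x)) * h y) (Ioi x) := by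
  refine (integrable_norm_iff (by fun_prop)).1 (hint.congr_fun (fun y _ => ?_) measurableSet_Ioi)
  simp [abs_of_pos (Real.exp_pos _)]

theorem PsiInt_eq_exp_mul_integral_Ioi (Φ u : ℝ) (h : ℝ → ℝ) :
    PsiInt Φ u h = Real.exp (Φ * u) * ∫ t in Ioi u, Real.exp (-Φ * t) * h t := by
  rw [PsiInt, ← integral_const_mul]
  refine setIntegral_congr_fun measurableSet_Ioi fun t _ => ?_
  rw [← mul_assoc, ← Real.exp_add]
  ring_nf

theorem hasDerivAt_PsiInt {Φ a u : ℝ} {h : ℝ → ℝ} (hh : Continuous h) (hau : a < u)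
    (hint : IntegrableOn (fun y => Real.exp (-Φ * (y - a)) * |h y|) (Ioi a)) :
    HasDerivAt (fun x => PsiInt Φ x h) (Φ * PsiInt Φ u h - h u) u := by
  have hint' : IntegrableOn (fun t => Real.exp (-Φ * t) * h t) (Ioi a) := by
    refine IntegrableOn.congr_fun ((integrableOn_exp_mul_of_abs hh.aestronglyMeasurable
      hint).const_mul (Real.exp (-Φ * a))) (fun t _ => ?_) measurableSet_Ioi
    rw [← mul_assoc, ← Real.exp_add]
    ring_nf
  have hI := hasDerivAt_integral_Ioi hint' hau (by fun_prop)
  have hexp : HasDerivAt (fun x => Real.exp (Φ * x)) (Real.exp (Φ * u) * Φ) u :=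
    ((hasDerivAt_id u).const_mul Φ).exp.congr_deriv (by simp)
  simp_rw [PsiInt_eq_exp_mul_integral_Ioi]
  refine (hexp.mul hI).congr_deriv ?_
  have hcancel : Real.exp (Φ * u) * Real.exp (-Φ * u) = 1 := by
    rw [← Real.exp_add]; ring_nf; exact Real.exp_zero
  linear_combination (-h u) * hcancel

theorem PsiInt_eq_of_hasDerivWithinAt_Ici {Φ y : ℝ} {g g' : ℝ → ℝ} (hg : Continuous g)
    (hg' : ∀ x, HasDerivWithinAt g (g' x) (Ici x) x)
    (hgtail : Tendsto (fun y => Real.exp (-Φ * y) * g y) atTop (𝓝 0))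
    (hgint : IntegrableOn (fun t => Real.exp (-Φ * (t - y)) * |g t|) (Ioi y))
    (hg'int : IntegrableOn (fun t => Real.exp (-Φ * (t - y)) * |g' t|) (Ioi y)) :
    PsiInt Φ y g' = Φ * PsiInt Φ y g - g y := by
  have hg'meas : Measurable g' := by
    have : g' = fun x => derivWithin g (Ici x) x :=
      funext fun x => ((hg' x).derivWithin (uniqueDiffOn_Ici x x self_mem_Ici)).symm
    exact this ▸ measurable_derivWithin_Ici g
  have hgI := integrableOn_exp_mul_of_abs hg.aestronglyMeasurable hgint
  have hg'I := integrableOn_exp_mul_of_abs hg'meas.aestronglyMeasurable hg'int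
  set e : ℝ → ℝ := fun t => Real.exp (-Φ * (t - y))
  have he : ∀ t, HasDerivAt e (-Φ * e t) t := fun t =>
    (((hasDerivAt_id t).sub_const y).const_mul (-Φ)).exp.congr_deriv (by simp [e]; ring)
  have htail : Tendsto (fun t => e t * g t) atTop (𝓝 0) := by
    have := hgtail.const_mul (Real.exp (Φ * y))
    rw [mul_zero] at this
    refine this.congr fun t => ?_
    simp only [e, ← mul_assoc, ← Real.exp_add]
    ring_nf
  have hFTC := integral_Ioi_of_hasDerivWithinAt_Ioi_of_tendsto (a := y)
    (f' := fun t => e t * g' t - Φ * (e t * g t)) (by fun_prop)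
    (fun t _ => ((he t).hasDerivWithinAt.mul ((hg' t).mono Ioi_subset_Ici_self)).congr_deriv
      (by ring)) (hg'I.sub (hgI.const_mul Φ)) htail
  rw [integral_sub hg'I (hgI.const_mul Φ), integral_const_mul] at hFTC
  simp only [e, Pi.mul_apply, sub_self, mul_zero, Real.exp_zero, one_mul] at hFTC
  rw [PsiInt, PsiInt]
  linarith

theorem continuousOn_Wbar {W : ℝ → ℝ} (hW : ContinuousOn W (Ici 0)) {L : ℝ} (hL : 0 ≤ L) :
    ContinuousOn (Wbar W) (Icc 0 L) := by
  have := intervalIntegral.continuousOn_primitive_interval (a := 0) (b := L) (μ := volume)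
    (f := W) (by rw [uIcc_of_le hL]; exact (hW.mono Icc_subset_Ici_self).integrableOn_Icc)
  rwa [uIcc_of_le hL] at this

theorem hasDerivAt_Wbar {W : ℝ → ℝ} (hW : ContinuousOn W (Ici 0)) {x : ℝ} (hx : 0 < x) :
    HasDerivAt (Wbar W) (W x) x := by
  have hWIoi : ContinuousOn W (Ioi 0) := hW.mono Ioi_subset_Ici_self
  exact intervalIntegral.integral_hasDerivAt_right
    ((hW.mono Icc_subset_Ici_self).intervalIntegrable_of_Icc hx.le)
    (hWIoi.stronglyMeasurableAtFilter isOpen_Ioi x hx) (hWIoi.continuousAt (Ioi_mem_nhds hx))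

theorem integral_mul_Thetabar_eq {Φ s S : ℝ} {W P g : ℝ → ℝ} (hW : ContinuousOn W (Ici 0))
    (hg : Continuous g) (hP : ∀ y, HasDerivAt P (Φ * P y - g y) y) (hsS : s ≤ S) :
    ∫ y in s..S, (Φ * P y - g y) * Thetabar Φ W (S - y)
      = Φ * P s * Wbar W (S - s) - phiInt W s S g := by
  have hPc : Continuous P := continuous_iff_continuousAt.2 fun y => (hP y).continuousAt
  have hmaps : MapsTo (fun y => S - y) (Icc s S) (Icc 0 (S - s)) := fun y hy =>
    ⟨by linarith [hy.2], by linarith [hy.1]⟩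
  have hWS : ContinuousOn (fun y => W (S - y)) (Icc s S) :=
    hW.comp (by fun_prop) fun y hy => Icc_subset_Ici_self (hmaps hy)
  have hWbarS : ContinuousOn (fun y => Wbar W (S - y)) (Icc s S) :=
    (continuousOn_Wbar hW (sub_nonneg.2 hsS)).comp (by fun_prop) hmaps
  set F' : ℝ → ℝ := fun y => (Φ * P y - g y) * Wbar W (S - y) - P y * W (S - y)
  have hF'c : ContinuousOn F' (Icc s S) := by
    have : ContinuousOn (fun y => Φ * P y - g y) (Icc s S) := by fun_prop
    exact (this.mul hWbarS).sub (hPc.continuousOn.mul hWS)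
  have hFTC : ∫ y in s..S, F' y = -(P s * Wbar W (S - s)) := by
    rw [intervalIntegral.integral_eq_sub_of_hasDerivAt_of_le hsS (hPc.continuousOn.mul hWbarS)
      (fun y hy => ((hP y).mul (((hasDerivAt_Wbar hW (sub_pos.2 hy.2)).comp y
        ((hasDerivAt_id y).const_sub S)))).congr_deriv (by simp [F']; ring))
      (hF'c.intervalIntegrable_of_Icc hsS)]
    simp [Wbar]
  have hWg : IntervalIntegrable (fun y => W (S - y) * g y) volume s S :=
    (hWS.mul hg.continuousOn).intervalIntegrable_of_Icc hsS
  calc ∫ y in s..S, (Φ * P y - g y) * Thetabar Φ W (S - y)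
      = ∫ y in s..S, -(W (S - y) * g y + Φ * F' y) :=
        intervalIntegral.integral_congr fun y _ => by simp only [Thetabar, F']; ring
    _ = Φ * P s * Wbar W (S - s) - phiInt W s S g := by
        rw [intervalIntegral.integral_neg, intervalIntegral.integral_add hWg
          ((hF'c.intervalIntegrable_of_Icc hsS).const_mul Φ),
          intervalIntegral.integral_const_mul, hFTC, phiInt]
        ring

theorem stmt8_general
    (γ σ q : ℝ) (ν : Measure ℝ) (W : ℝ → ℝ)
    (hWcont : ContinuousOn W (Set.Ici 0))
    (g g' : ℝ → ℝ) (hg : Continuous g)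
    (hg' : ∀ x, HasDerivWithinAt g (g' x) (Set.Ici x) x)
    (hgtail : Tendsto (fun y => Real.exp (-(PhiQ γ σ ν q) * y) * g y) atTop (𝓝 0))
    (hgint : ∀ x : ℝ, IntegrableOn
      (fun y => Real.exp (-(PhiQ γ σ ν q) * (y - x)) * |g y|) (Set.Ioi x))
    (hg'int : ∀ x : ℝ, IntegrableOn
      (fun y => Real.exp (-(PhiQ γ σ ν q) * (y - x)) * |g' y|) (Set.Ioi x)) :
    ∀ s S : ℝ, s ≤ S →
      (PhiQ γ σ ν q * PsiInt (PhiQ γ σ ν q) s g * Wbar W (S - s) - phiInt W s S g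
        = ∫ y in s..S, PsiInt (PhiQ γ σ ν q) y g' * Thetabar (PhiQ γ σ ν q) W (S - y)) ∧
      ∀ K : ℝ,
        PhiQ γ σ ν q * PsiInt (PhiQ γ σ ν q) s g * Wbar W (S - s) + K - phiInt W s S g
          = (∫ y in s..S, PsiInt (PhiQ γ σ ν q) y g' * Thetabar (PhiQ γ σ ν q) W (S - y))
              + K := by
  intro s S hsS
  set Φ := PhiQ γ σ ν q
  have hΨg' : ∀ y, PsiInt Φ y g' = Φ * PsiInt Φ y g - g y := fun y =>
    PsiInt_eq_of_hasDerivWithinAt_Ici hg hg' hgtail (hgint y) (hg'int y)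
  have key := integral_mul_Thetabar_eq (P := fun x => PsiInt Φ x g) hWcont hg
    (fun y => hasDerivAt_PsiInt hg (sub_one_lt y) (hgint _)) hsS
  simp_rw [hΨg']
  exact ⟨key.symm, fun K => by linarith⟩

theorem stmt8
    (γ σ q : ℝ) (ν : Measure ℝ) (W : ℝ → ℝ)
    (hσ : 0 ≤ σ)
    (hνconc : ν (Set.Ici 0) = 0)
    (hνint : Integrable (fun z => min 1 (z ^ 2)) ν)
    (hψtop : Tendsto (psi γ σ ν) atTop atTop)
    (hq : 0 < q)
    (hΦpos : 0 < PhiQ γ σ ν q)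
    (hWnonneg : ∀ x, 0 ≤ W x)
    (hWzero : ∀ x < 0, W x = 0)
    (hWcont : ContinuousOn W (Set.Ici 0))
    (hWmono : StrictMonoOn W (Set.Ici 0))
    (hWlaplace : ∀ s, PhiQ γ σ ν q < s →
      ∫ x in Set.Ioi (0:ℝ), Real.exp (-s * x) * W x = 1 / (psi γ σ ν s - q))
    (g g' : ℝ → ℝ) (hg : Continuous g)
    (hg' : ∀ x, HasDerivWithinAt g (g' x) (Set.Ici x) x)
    (hgtail : Tendsto (fun y => Real.exp (-(PhiQ γ σ ν q) * y) * g y) atTop (𝓝 0))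
    (hgint : ∀ x : ℝ, IntegrableOn
      (fun y => Real.exp (-(PhiQ γ σ ν q) * (y - x)) * |g y|) (Set.Ioi x))
    (hg'int : ∀ x : ℝ, IntegrableOn
      (fun y => Real.exp (-(PhiQ γ σ ν q) * (y - x)) * |g' y|) (Set.Ioi x)) :
    ∀ s S : ℝ, s ≤ S →
      (PhiQ γ σ ν q * PsiInt (PhiQ γ σ ν q) s g * Wbar W (S - s) - phiInt W s S g
        = ∫ y in s..S, PsiInt (PhiQ γ σ ν q) y g' * Thetabar (PhiQ γ σ ν q) W (S - y)) ∧
      ∀ K : ℝ,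
        PhiQ γ σ ν q * PsiInt (PhiQ γ σ ν q) s g * Wbar W (S - s) + K - phiInt W s S g
          = (∫ y in s..S, PsiInt (PhiQ γ σ ν q) y g' * Thetabar (PhiQ γ σ ν q) W (S - y))
              + K :=
  stmt8_general γ σ q ν W hWcont g g' hg hg' hgtail hgint hg'int
end
end

section
/- Let p > 0 and γ_S, γ_I be constants with 0 ≤ γ_I < 1 and γ_S + γ_I > 0, and fix 0 < β. For α ∈ (0, β) at which ν({−α}) = 0, the map α ↦ Λ(α, β) is differentiable at α with ∂Λ(α, β)/∂α = −W(β−α) λ̂(α), where λ̂(α) = −(p + q γ_I) + (1 − γ_I) ν̄(α) and ν̄(α) = ν((−∞, −α)). -/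
open MeasureTheory Set Filter Topology

noncomputable section

/-- `ζ(x) = Z(x) − (q/Φ(q)) W(x)`. -/
def zeta (q Φq : ℝ) (W : ℝ → ℝ) (x : ℝ) : ℝ := Zfun q W x - q / Φq * W x

/-- Payoff when the sup player stops first:
`g_S(x) = 1_{x>0} [(p/q − γ_S) − (p/q + 1) ζ(x)]`. -/
def gSfun (q Φq p γS : ℝ) (W : ℝ → ℝ) (x : ℝ) : ℝ :=
  if 0 < x then (p / q - γS) - (p / q + 1) * zeta q Φq W x else 0

/-- Payoff when the inf player stops first:
`g_I(x) = 1_{x>0} [(p/q + γ_I) − (p/q + 1) ζ(x)]`. -/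
def gIfun (q Φq p γI : ℝ) (W : ℝ → ℝ) (x : ℝ) : ℝ :=
  if 0 < x then (p / q + γI) - (p / q + 1) * zeta q Φq W x else 0

/-- `Λ(α,β)` for the cancellation game. -/
def LamGame (q p γS γI : ℝ) (ν : Measure ℝ) (W : ℝ → ℝ) (α β : ℝ) : ℝ :=
  p / q - γS - (p / q + γI) * Zfun q W (β - α)
    + (1 - γI) / q * ∫ u in Set.Iio (-α), (Zfun q W (β - α) - Zfun q W (β + u)) ∂ν

/-- `λ(α,β)` for the cancellation game. -/
def lamGame (q p γI : ℝ) (ν : Measure ℝ) (W : ℝ → ℝ) (α β : ℝ) : ℝ :=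
  -(p + q * γI) * W (β - α)
    + (1 - γI) * ∫ u in Set.Iio (-α), (W (β - α) - W (β + u)) ∂ν

/-- Candidate value function for the cancellation game with thresholds `0 < α < β < ∞`. -/
def vGame (q Φq p γS γI : ℝ) (ν : Measure ℝ) (W : ℝ → ℝ) (α β : ℝ) (x : ℝ) : ℝ :=
  if x ≤ 0 then 0
  else if x ≤ α then gIfun q Φq p γI W x
  else if x < β then
    -(p / q + 1) * zeta q Φq W x + (p / q + γI) * Zfun q W (x - α)
      - (1 - γI) / q * ∫ u in Set.Iio (-α), (Zfun q W (x - α) - Zfun q W (x + u)) ∂ν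
  else gSfun q Φq p γS W x

/-!
Because `Z` is nondecreasing, `∫_{u < -a} (Z(β-a) - Z(β+u)) ν(du)` equals the integral over all
of `ℝ` of the positive part `(Z(β-a) - Z(β+u))⁺`, so the moving domain disappears and `Λ(·, β)`
can be differentiated under the integral sign. Off `u = -α`, a `ν`-null set, the integrand has
`a`-derivative `-Z'(β-α) 1_{u<-α} = -q W(β-α) 1_{u<-α}`; its increments are dominated by a multiple
of `1_{u<-α'}` for some `α' < α`, which is `ν`-integrable since `ν` has finite mass away from `0`.
-/

open scoped ENNReal

section

variable {α : Type*} [MeasurableSpace α] {μ : Measure α} {𝕜 : Type*} [RCLike 𝕜]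
  {E : Type*} [NormedAddCommGroup E] [NormedSpace ℝ E] [NormedSpace 𝕜 E]
  {F : 𝕜 → α → E} {F' : α → E} {x₀ : 𝕜} {s : Set 𝕜} {bound : α → ℝ}

theorem hasDerivAt_integral_of_dominated_loc_of_lip' (hs : s ∈ 𝓝 x₀)
    (hF_meas : ∀ x ∈ s, AEStronglyMeasurable (F x) μ) (hF_int : Integrable (F x₀) μ)
    (hF'_meas : AEStronglyMeasurable F' μ)
    (h_lipsch : ∀ᵐ a ∂μ, ∀ x ∈ s, ‖F x a - F x₀ a‖ ≤ bound a * ‖x - x₀‖)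
    (bound_integrable : Integrable bound μ)
    (h_diff : ∀ᵐ a ∂μ, HasDerivAt (F · a) (F' a) x₀) :
    HasDerivAt (fun x ↦ ∫ a, F x a ∂μ) (∫ a, F' a ∂μ) x₀ := by
  set L : E →L[𝕜] 𝕜 →L[𝕜] E := ContinuousLinearMap.smulRightL 𝕜 𝕜 E 1
  have hm : AEStronglyMeasurable (L ∘ F') μ := L.continuous.comp_aestronglyMeasurable hF'_meas
  obtain ⟨hLF'_int, key⟩ := hasFDerivAt_integral_of_dominated_loc_of_lip' hs hF_meas hF_int hm
    h_lipsch bound_integrable (h_diff.mono fun _ h ↦ h.hasFDerivAt)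
  have hF'_int : Integrable F' μ := by
    rw [← integrable_norm_iff hm] at hLF'_int
    simpa [L, Function.comp_def, integrable_norm_iff hF'_meas] using hLF'_int
  by_cases hE : CompleteSpace E; swap
  · simpa [integral, hE] using hasDerivAt_const x₀ 0
  rw [hasDerivAt_iff_hasFDerivAt]
  simpa only [Function.comp_def, ContinuousLinearMap.integral_comp_comm _ hF'_int] using! key

end

section

variable {ν : Measure ℝ} {Z : ℝ → ℝ} {c α z : ℝ}

theorem setIntegral_Iio_neg_sub_eq_integral_max (hZ : Monotone Z) (x : ℝ) :
    ∫ u in Iio (-x), (Z (c - x) - Z (c + u)) ∂ν = ∫ u, max (Z (c - x) - Z (c + u)) 0 ∂ν := by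
  calc ∫ u in Iio (-x), (Z (c - x) - Z (c + u)) ∂ν
      = ∫ u in Iio (-x), max (Z (c - x) - Z (c + u)) 0 ∂ν :=
        setIntegral_congr_fun measurableSet_Iio fun u hu ↦
          (max_eq_left (sub_nonneg.2 (hZ (by linarith [mem_Iio.1 hu])))).symm
    _ = ∫ u, max (Z (c - x) - Z (c + u)) 0 ∂ν :=
        setIntegral_eq_integral_of_forall_compl_eq_zero fun u hu ↦
          max_eq_right (sub_nonpos.2 (hZ (by linarith [notMem_Iio.1 hu])))

theorem hasDerivAt_setIntegral_Iio_neg_sub (hZ : Monotone Z) (hZd : HasDerivAt Z z (c - α))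
    (hfin : ∃ a < α, ν (Iio (-a)) < ∞)
    (hint : IntegrableOn (fun u ↦ Z (c - α) - Z (c + u)) (Iio (-α)) ν) (hα : ν {-α} = 0) :
    HasDerivAt (fun x ↦ ∫ u in Iio (-x), (Z (c - x) - Z (c + u)) ∂ν)
      (-(z * ν.real (Iio (-α)))) α := by
  set F : ℝ → ℝ → ℝ := fun x u ↦ max (Z (c - x) - Z (c + u)) 0
  have hF_zero : ∀ x u, -x ≤ u → F x u = 0 := fun x u hu ↦
    max_eq_right (sub_nonpos.2 (hZ (by linarith)))
  have hF_pos : ∀ x u, u ≤ -x → F x u = Z (c - x) - Z (c + u) := fun x u hu ↦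
    max_eq_left (sub_nonneg.2 (hZ (by linarith)))
  have hZc : HasDerivAt (fun x ↦ Z (c - x)) (-z) α := hZd.comp_const_sub c α
  -- Differentiability of `Z` at a single point only bounds the increments at `α`, which suffices.
  obtain ⟨K, -, hK⟩ := hZc.isBigO_sub.exists_pos
  obtain ⟨a, haα, ha⟩ := hfin
  set s := {x | ‖Z (c - x) - Z (c - α)‖ ≤ K * ‖x - α‖} ∩ Ioi a
  have hs : s ∈ 𝓝 α := inter_mem (Asymptotics.isBigOWith_iff.1 hK) (Ioi_mem_nhds haα)
  have hF_meas : ∀ x, Measurable (F x) := fun x ↦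
    (measurable_const.sub (hZ.measurable.comp (measurable_const_add c))).max measurable_const
  have h_lipsch :
      ∀ u, ∀ x ∈ s, ‖F x u - F α u‖ ≤ (Iio (-a)).indicator (fun _ ↦ K) u * ‖x - α‖ := by
    intro u x hx
    by_cases hu : u < -a
    · rw [indicator_of_mem (mem_Iio.2 hu)]
      calc ‖F x u - F α u‖ ≤ ‖Z (c - x) - Z (c - α)‖ := by
            simpa only [F, Real.norm_eq_abs, sub_sub_sub_cancel_right] using
              abs_max_sub_max_le_abs (Z (c - x) - Z (c + u)) (Z (c - α) - Z (c + u)) 0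
        _ ≤ K * ‖x - α‖ := hx.1
    · rw [indicator_of_notMem (notMem_Iio.2 (not_lt.1 hu)), hF_zero x u (by linarith [hx.2.out]),
        hF_zero α u (by linarith)]
      simp
  have h_diff : ∀ u ≠ -α, HasDerivAt (F · u) ((Iio (-α)).indicator (fun _ ↦ -z) u) α := by
    intro u hu
    rcases hu.lt_or_gt with hu | hu
    · rw [indicator_of_mem (mem_Iio.2 hu)]
      refine (hZc.sub_const (Z (c + u))).congr_of_eventuallyEq ?_
      filter_upwards [Iio_mem_nhds (show α < -u by linarith)] with x hx
      exact hF_pos x u (by linarith [hx.out])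
    · rw [indicator_of_notMem (notMem_Iio.2 hu.le)]
      refine (hasDerivAt_const α 0).congr_of_eventuallyEq ?_
      filter_upwards [Ioi_mem_nhds (show -u < α by linarith)] with x hx
      exact hF_zero x u (by linarith [hx.out])
  have hF_int : Integrable (F α) ν := by
    have hF_ind : F α = (Iio (-α)).indicator (fun u ↦ Z (c - α) - Z (c + u)) := by
      ext u
      by_cases hu : u < -α
      · rw [indicator_of_mem (mem_Iio.2 hu), hF_pos α u hu.le]
      · rw [indicator_of_notMem (notMem_Iio.2 (not_lt.1 hu)), hF_zero α u (not_lt.1 hu)]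
    rwa [hF_ind, integrable_indicator_iff measurableSet_Iio]
  have key := hasDerivAt_integral_of_dominated_loc_of_lip' hs
    (fun x _ ↦ (hF_meas x).aestronglyMeasurable) hF_int
    ((measurable_const.indicator measurableSet_Iio).aestronglyMeasurable)
    (ae_of_all _ h_lipsch)
    ((integrable_indicator_iff measurableSet_Iio).2 (integrableOn_const ha.ne))
    (measure_eq_zero_iff_ae_notMem.1 hα |>.mono h_diff)
  rw [← funext (setIntegral_Iio_neg_sub_eq_integral_max (ν := ν) hZ)] at key
  refine key.congr_deriv ?_
  rw [integral_indicator_const _ measurableSet_Iio, smul_eq_mul]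
  ring

end

section

variable {q : ℝ} {W : ℝ → ℝ}

theorem monotone_of_monotoneOn_Ici (hW0 : ∀ x, 0 ≤ W x) (hneg : ∀ x < 0, W x = 0)
    (hmono : MonotoneOn W (Ici 0)) : Monotone W := by
  intro x y hxy
  rcases lt_or_ge x 0 with hx | hx
  · rw [hneg x hx]
    exact hW0 y
  · exact hmono hx (hx.trans hxy) hxy

theorem monotone_Zfun (hq : 0 ≤ q) (hW0 : ∀ x, 0 ≤ W x) (hW : Monotone W) :
    Monotone (Zfun q W) := by
  intro x y hxy
  have hxy' : 0 ≤ ∫ t in x..y, W t := intervalIntegral.integral_nonneg hxy fun t _ ↦ hW0 t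
  have := intervalIntegral.integral_interval_sub_left (μ := volume)
    (hW.intervalIntegrable (a := 0) (b := y)) (hW.intervalIntegrable (b := x))
  simp only [Zfun]
  nlinarith

theorem Zfun_of_nonpos (hneg : ∀ x < 0, W x = 0) {x : ℝ} (hx : x ≤ 0) : Zfun q W x = 1 := by
  have h : ∫ t in x..0, W t = 0 := by
    rw [intervalIntegral.integral_of_le hx, integral_Ioc_eq_integral_Ioo]
    exact setIntegral_eq_zero_of_forall_eq_zero fun t ht ↦ hneg t ht.2
  rw [Zfun, intervalIntegral.integral_symm, h, neg_zero, mul_zero, add_zero]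

theorem one_le_Zfun (hq : 0 ≤ q) (hW0 : ∀ x, 0 ≤ W x) (hneg : ∀ x < 0, W x = 0)
    (hW : Monotone W) (x : ℝ) : 1 ≤ Zfun q W x :=
  (Zfun_of_nonpos (q := q) hneg (min_le_right x 0)).symm.le.trans
    (monotone_Zfun hq hW0 hW (min_le_left x 0))

theorem hasDerivAt_Zfun (hW : Monotone W) {y : ℝ} (hy : ContinuousAt W y) :
    HasDerivAt (Zfun q W) (q * W y) y :=
  ((intervalIntegral.integral_hasDerivAt_right hW.intervalIntegrable
    hW.measurable.stronglyMeasurable.stronglyMeasurableAtFilter hy).const_mul q).const_add 1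

theorem integrableOn_Iio_neg_Zfun_sub {ν : Measure ℝ} (hq : 0 ≤ q) (hW0 : ∀ x, 0 ≤ W x)
    (hneg : ∀ x < 0, W x = 0) (hW : Monotone W) (c : ℝ) {α : ℝ} (hα : ν (Iio (-α)) < ∞) :
    IntegrableOn (fun u ↦ Zfun q W (c - α) - Zfun q W (c + u)) (Iio (-α)) ν := by
  have hZ := monotone_Zfun hq hW0 hW
  refine IntegrableOn.of_bound hα
    ((measurable_const.sub (hZ.measurable.comp (measurable_const_add c))).aestronglyMeasurable)
    (Zfun q W (c - α)) (ae_restrict_of_forall_mem measurableSet_Iio fun u hu ↦ ?_)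
  have h1 := one_le_Zfun hq hW0 hneg hW (c + u)
  have h2 := hZ (show c + u ≤ c - α by linarith [mem_Iio.1 hu])
  rw [Real.norm_eq_abs, abs_le]
  constructor <;> linarith

end

theorem measure_Iio_neg_lt_top {ν : Measure ℝ} (hν : Integrable (fun z ↦ min 1 (z ^ 2)) ν)
    {a : ℝ} (ha : 0 < a) : ν (Iio (-a)) < ∞ := by
  refine (measure_mono fun z hz ↦ ?_).trans_lt
    (hν.measure_ge_lt_top (ε := min 1 (a ^ 2)) (by positivity))
  have : a ^ 2 ≤ z ^ 2 := by nlinarith [mem_Iio.1 hz]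
  exact min_le_min_left 1 this

theorem stmt16_general
    (q : ℝ) (ν : Measure ℝ) (W : ℝ → ℝ)
    (hνint : Integrable (fun z => min 1 (z ^ 2)) ν)
    (hq : 0 < q)
    (hWnonneg : ∀ x, 0 ≤ W x)
    (hWzero : ∀ x < 0, W x = 0)
    (hWcont : ContinuousOn W (Set.Ici 0))
    (hWmono : StrictMonoOn W (Set.Ici 0))
    (p γS γI : ℝ)
    (β : ℝ) :
    ∀ α, 0 < α → α < β → ν {(-α)} = 0 →
      HasDerivAt (fun a => LamGame q p γS γI ν W a β)
        (-(W (β - α) * (-(p + q * γI) + (1 - γI) * (ν (Set.Iio (-α))).toReal))) α := by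
  intro α hα hαβ hνα
  have hW := monotone_of_monotoneOn_Ici hWnonneg hWzero hWmono.monotoneOn
  have hZ := monotone_Zfun hq.le hWnonneg hW
  have hZd : HasDerivAt (Zfun q W) (q * W (β - α)) (β - α) :=
    hasDerivAt_Zfun hW (hWcont.continuousAt (Ici_mem_nhds (sub_pos.2 hαβ)))
  have hint := integrableOn_Iio_neg_Zfun_sub hq.le hWnonneg hWzero hW β
    (measure_Iio_neg_lt_top hνint hα)
  have hG := hasDerivAt_setIntegral_Iio_neg_sub hZ hZd
    ⟨α / 2, by linarith, measure_Iio_neg_lt_top hνint (by linarith)⟩ hint hνα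
  refine (((hasDerivAt_const α (p / q - γS)).sub
    ((hZd.comp_const_sub β α).const_mul (p / q + γI))).add
      (hG.const_mul ((1 - γI) / q))).congr_deriv ?_
  rw [measureReal_def]
  field_simp
  ring

theorem stmt16
    (γ σ q : ℝ) (ν : Measure ℝ) (W : ℝ → ℝ)
    (hσ : 0 ≤ σ)
    (hνconc : ν (Set.Ici 0) = 0)
    (hνint : Integrable (fun z => min 1 (z ^ 2)) ν)
    (hψtop : Tendsto (psi γ σ ν) atTop atTop)
    (hq : 0 < q)
    (hΦpos : 0 < PhiQ γ σ ν q)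
    (hWnonneg : ∀ x, 0 ≤ W x)
    (hWzero : ∀ x < 0, W x = 0)
    (hWcont : ContinuousOn W (Set.Ici 0))
    (hWmono : StrictMonoOn W (Set.Ici 0))
    (hWlaplace : ∀ s, PhiQ γ σ ν q < s →
      ∫ x in Set.Ioi (0:ℝ), Real.exp (-s * x) * W x = 1 / (psi γ σ ν s - q))
    (p γS γI : ℝ) (hp : 0 < p) (hγI0 : 0 ≤ γI) (hγI1 : γI < 1) (hγsum : 0 < γS + γI)
    (β : ℝ) (hβ : 0 < β) :
    ∀ α, 0 < α → α < β → ν {(-α)} = 0 →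
      HasDerivAt (fun a => LamGame q p γS γI ν W a β)
        (-(W (β - α) * (-(p + q * γI) + (1 - γI) * (ν (Set.Iio (-α))).toReal))) α :=
  stmt16_general q ν W hνint hq hWnonneg hWzero hWcont hWmono p γS γI β
end
end
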